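/- arXiv:2208.14590 — 3 statements merged into one kernel-verified Lean document; each statement's English description precedes it below -/
import Mathlib

section
/- Let A, B be m×m complex matrices with B invertible, let M, K be n×n complex matrices with M invertible, let τ, α, β be real with A+αB and τK+βM invertible, and let ω be real. Then every eigenvalue p of the MSKP iteration matrix T(α,β,ω) can be written as p = [(λ̃−β)(μ̃−α) + ((α+β)ω/2)(λ̃+α) + ((α+β)ω/2)(μ̃−α)] / [(λ̃+α)(μ̃+β)] for some λ̃ ∈ σ(B⁻¹A) and some μ̃ ∈ σ(τ·M⁻¹K). -/
set_option synthInstance.maxHeartbeats 1000000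
set_option maxHeartbeats 2000000

open Matrix Kronecker


lemma my_sub_kronecker {l m n p : Type*} (A B : Matrix l m ℂ) (C : Matrix n p ℂ) :
    (A - B) ⊗ₖ C = A ⊗ₖ C - B ⊗ₖ C := by
  ext ⟨i, j⟩ ⟨k, s⟩
  simp [Matrix.kroneckerMap_apply, sub_mul]

lemma my_kronecker_sub {l m n p : Type*} (A : Matrix l m ℂ) (B C : Matrix n p ℂ) :
    A ⊗ₖ (B - C) = A ⊗ₖ B - A ⊗ₖ C := by
  ext ⟨i, j⟩ ⟨k, s⟩
  simp [Matrix.kroneckerMap_apply, mul_sub]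

/-- An eigenvalue (with eigenvector) is in the matrix spectrum. -/
lemma mem_spectrum_of_eigvec {ι : Type*} [Fintype ι] [DecidableEq ι]
    (A : Matrix ι ι ℂ) (lt : ℂ) (c : ι → ℂ) (hc : c ≠ 0)
    (h : A.mulVec c = lt • c) : lt ∈ spectrum ℂ A := by
  rw [spectrum.mem_iff]
  intro hu
  rw [Matrix.isUnit_iff_isUnit_det, isUnit_iff_ne_zero] at hu
  apply hu
  rw [← Matrix.exists_mulVec_eq_zero_iff]
  refine ⟨c, hc, ?_⟩
  rw [Algebra.algebraMap_eq_smul_one, Matrix.sub_mulVec, Matrix.smul_mulVec,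
    Matrix.one_mulVec, h, sub_self]

/-- A spectrum value avoids `-α` when `A + α•1` is invertible. -/
lemma spectrum_add_ne {ι : Type*} [Fintype ι] [DecidableEq ι]
    (A : Matrix ι ι ℂ) (α lt : ℂ) (hA : IsUnit (A + α • (1 : Matrix ι ι ℂ)))
    (hlt : lt ∈ spectrum ℂ A) : lt + α ≠ 0 := by
  intro h0
  rw [spectrum.mem_iff] at hlt
  apply hlt
  have : algebraMap ℂ (Matrix ι ι ℂ) lt - A = -(A + α • 1) := by
    rw [Algebra.algebraMap_eq_smul_one]
    have : lt = -α := by linear_combination h0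
    rw [this]
    module
  rw [this]
  exact hA.neg

/-- Common eigenvector in the kernel of a singular matrix commuting with `X`, `Y`. -/
lemma common_eigenvector_ker {ι : Type*} [Fintype ι] [DecidableEq ι]
    (S X Y : Matrix ι ι ℂ) (hdet : S.det = 0)
    (hSX : S * X = X * S) (hSY : S * Y = Y * S) (hXY : X * Y = Y * X) :
    ∃ v : ι → ℂ, v ≠ 0 ∧ ∃ lt mt : ℂ,
      S.mulVec v = 0 ∧ X.mulVec v = lt • v ∧ Y.mulVec v = mt • v := by
  obtain ⟨v0, hv0, hSv0⟩ := (Matrix.exists_mulVec_eq_zero_iff).2 hdet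
  set N : Submodule ℂ (ι → ℂ) := LinearMap.ker S.mulVecLin with hN
  have hv0N : v0 ∈ N := by simpa [hN, Matrix.mulVecLin_apply] using hSv0
  haveI hNnt : Nontrivial N := by
    refine nontrivial_of_ne ⟨v0, hv0N⟩ 0 ?_
    simp [Subtype.ext_iff, hv0]
  have hmaps : ∀ (Z : Matrix ι ι ℂ), S * Z = Z * S →
      ∀ x ∈ N, Z.mulVecLin x ∈ N := by
    intro Z hZ x hx
    simp only [hN, LinearMap.mem_ker, Matrix.mulVecLin_apply] at hx ⊢
    rw [Matrix.mulVec_mulVec, hZ, ← Matrix.mulVec_mulVec, hx, Matrix.mulVec_zero]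
  have hXmaps := hmaps X hSX
  have hYmaps := hmaps Y hSY
  set X' : Module.End ℂ N := X.mulVecLin.restrict hXmaps with hX'
  set Y' : Module.End ℂ N := Y.mulVecLin.restrict hYmaps with hY'
  have hcomm : Commute X' Y' := by
    refine LinearMap.ext fun x => ?_
    refine Subtype.ext ?_
    show X.mulVec (Y.mulVec (x : ι → ℂ)) = Y.mulVec (X.mulVec (x : ι → ℂ))
    rw [Matrix.mulVec_mulVec, Matrix.mulVec_mulVec, hXY]
  obtain ⟨lt, hlt⟩ := Module.End.exists_eigenvalue X'
  have hEne : X'.eigenspace lt ≠ ⊥ := hlt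
  have hYE : Set.MapsTo Y' (X'.eigenspace lt) (X'.eigenspace lt) :=
    Module.End.mapsTo_genEigenspace_of_comm hcomm lt 1
  set Y'' : Module.End ℂ (X'.eigenspace lt) := Y'.restrict hYE with hY''
  haveI hEnt : Nontrivial (X'.eigenspace lt) := by
    obtain ⟨x, hx, hx0⟩ := Submodule.exists_mem_ne_zero_of_ne_bot hEne
    exact nontrivial_of_ne ⟨x, hx⟩ 0 (by simp [Subtype.ext_iff, hx0])
  obtain ⟨mt, hmt⟩ := Module.End.exists_eigenvalue (K := ℂ) (V := X'.eigenspace lt) Y''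
  obtain ⟨w, hw⟩ := hmt.exists_hasEigenvector
  refine ⟨((w.1 : N) : ι → ℂ), ?_, lt, mt, ?_, ?_, ?_⟩
  · intro h
    exact hw.2 (by apply Subtype.ext; apply Subtype.ext; exact h)
  · have h2 := (w.1 : N).2
    simp only [hN, LinearMap.mem_ker, Matrix.mulVecLin_apply] at h2
    exact h2
  · have hmem : (w.1 : N) ∈ X'.eigenspace lt := w.2
    have h3 := Module.End.mem_eigenspace_iff.1 hmem
    have h4 := congrArg (Subtype.val) h3
    simpa [hX', LinearMap.restrict_apply, Matrix.mulVecLin_apply] using h4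
  · have h5 := hw.apply_eq_smul
    have h6 := congrArg (fun z : X'.eigenspace lt => ((z.1 : N) : ι → ℂ)) h5
    simpa [hY'', hY', LinearMap.restrict_apply, Matrix.mulVecLin_apply] using h6

/-- Eigenvectors of `A ⊗ₖ 1` give eigenvectors of `A`. -/
lemma kron_left_eigvec {m n : ℕ} (A : Matrix (Fin m) (Fin m) ℂ) (lt : ℂ)
    (v : Fin m × Fin n → ℂ) (hv : v ≠ 0)
    (h : (A ⊗ₖ (1 : Matrix (Fin n) (Fin n) ℂ)).mulVec v = lt • v) :
    lt ∈ spectrum ℂ A := by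
  obtain ⟨⟨i0, j0⟩, hij⟩ := Function.ne_iff.1 hv
  refine mem_spectrum_of_eigvec A lt (fun i => v (i, j0)) ?_ ?_
  · exact Function.ne_iff.2 ⟨i0, hij⟩
  · funext i
    have := congrFun h (i, j0)
    simpa [Matrix.mulVec, dotProduct, Fintype.sum_prod_type,
      Matrix.kroneckerMap_apply, Matrix.one_apply, mul_ite, ite_mul] using this

/-- Eigenvectors of `1 ⊗ₖ B` give eigenvectors of `B`. -/
lemma kron_right_eigvec {m n : ℕ} (B : Matrix (Fin n) (Fin n) ℂ) (mt : ℂ)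
    (v : Fin m × Fin n → ℂ) (hv : v ≠ 0)
    (h : ((1 : Matrix (Fin m) (Fin m) ℂ) ⊗ₖ B).mulVec v = mt • v) :
    mt ∈ spectrum ℂ B := by
  obtain ⟨⟨i0, j0⟩, hij⟩ := Function.ne_iff.1 hv
  refine mem_spectrum_of_eigvec B mt (fun j => v (i0, j)) ?_ ?_
  · exact Function.ne_iff.2 ⟨j0, hij⟩
  · funext j
    have := congrFun h (i0, j)
    simpa [Matrix.mulVec, dotProduct, Fintype.sum_prod_type,
      Matrix.kroneckerMap_apply, Matrix.one_apply, mul_ite, ite_mul] using this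

open Matrix Kronecker

lemma comm_aux {ι : Type*} [Fintype ι] [DecidableEq ι] (a b d e : ℂ)
    (Z W : Matrix ι ι ℂ) (h : Z * W = W * Z) :
    (a • (Z * W) + b • Z + d • W + e • (1 : Matrix ι ι ℂ)) * Z
      = Z * (a • (Z * W) + b • Z + d • W + e • (1 : Matrix ι ι ℂ)) := by
  simp only [Matrix.add_mul, Matrix.mul_add, smul_mul_assoc, mul_smul_comm,
    Matrix.one_mul, Matrix.mul_one]
  rw [Matrix.mul_assoc, ← h]

open Matrix Kronecker

/-- The MSKP iteration matrix `T(α,β,ω)`. -/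
noncomputable def mskpT {m n : ℕ} (A B : Matrix (Fin m) (Fin m) ℂ)
    (M K : Matrix (Fin n) (Fin n) ℂ) (τ α β ω : ℝ) :
    Matrix (Fin m × Fin n) (Fin m × Fin n) ℂ :=
  ((A + (α : ℂ) • B) ⊗ₖ ((τ : ℂ) • K + (β : ℂ) • M))⁻¹ *
    ((A - (β : ℂ) • B) ⊗ₖ ((τ : ℂ) • K - (α : ℂ) • M)
      + (((α + β) * ω / 2 : ℝ) : ℂ) • ((A + (α : ℂ) • B) ⊗ₖ M)
      + (((α + β) * ω / 2 : ℝ) : ℂ) • (B ⊗ₖ ((τ : ℂ) • K - (α : ℂ) • M)))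

/-- Every eigenvalue `p` of the MSKP iteration matrix `T(α,β,ω)` has the form
`p = [(λ̃−β)(μ̃−α) + ((α+β)ω/2)(λ̃+α) + ((α+β)ω/2)(μ̃−α)] / [(λ̃+α)(μ̃+β)]`
for some eigenvalue `λ̃` of `B⁻¹A` and some eigenvalue `μ̃` of `τ·M⁻¹K`. -/
theorem mskp_eigenvalue_form {m n : ℕ} (A B : Matrix (Fin m) (Fin m) ℂ)
    (M K : Matrix (Fin n) (Fin n) ℂ) (τ α β ω : ℝ)
    (hB : IsUnit B) (hM : IsUnit M)
    (hAB : IsUnit (A + (α : ℂ) • B))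
    (hKM : IsUnit ((τ : ℂ) • K + (β : ℂ) • M)) :
    ∀ p ∈ spectrum ℂ (mskpT A B M K τ α β ω),
      ∃ lt ∈ spectrum ℂ (B⁻¹ * A),
        ∃ mt ∈ spectrum ℂ ((τ : ℂ) • (M⁻¹ * K)),
          p = ((lt - (β : ℂ)) * (mt - (α : ℂ))
                + (((α + β) * ω / 2 : ℝ) : ℂ) * (lt + (α : ℂ))
                + (((α + β) * ω / 2 : ℝ) : ℂ) * (mt - (α : ℂ)))
              / ((lt + (α : ℂ)) * (mt + (β : ℂ))) := by
  intro p hp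
  set c : ℂ := (((α + β) * ω / 2 : ℝ) : ℂ) with hcdef
  set At : Matrix (Fin m) (Fin m) ℂ := B⁻¹ * A with hAtdef
  set Kt : Matrix (Fin n) (Fin n) ℂ := (τ : ℂ) • (M⁻¹ * K) with hKtdef
  have hBdet : IsUnit B.det := (Matrix.isUnit_iff_isUnit_det B).1 hB
  have hMdet : IsUnit M.det := (Matrix.isUnit_iff_isUnit_det M).1 hM
  -- factorizations
  have hfac1 : A + (α : ℂ) • B = B * (At + (α : ℂ) • 1) := by
    rw [hAtdef, Matrix.mul_add, Matrix.mul_smul, Matrix.mul_one, ← Matrix.mul_assoc,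
      Matrix.mul_nonsing_inv _ hBdet, Matrix.one_mul]
  have hfac2 : (τ : ℂ) • K + (β : ℂ) • M = M * (Kt + (β : ℂ) • 1) := by
    rw [hKtdef, Matrix.mul_add, Matrix.mul_smul, Matrix.mul_smul, Matrix.mul_one,
      ← Matrix.mul_assoc, Matrix.mul_nonsing_inv _ hMdet, Matrix.one_mul]
  have hfac3 : A - (β : ℂ) • B = B * (At - (β : ℂ) • 1) := by
    rw [hAtdef, Matrix.mul_sub, Matrix.mul_smul, Matrix.mul_one, ← Matrix.mul_assoc,
      Matrix.mul_nonsing_inv _ hBdet, Matrix.one_mul]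
  have hfac4 : (τ : ℂ) • K - (α : ℂ) • M = M * (Kt - (α : ℂ) • 1) := by
    rw [hKtdef, Matrix.mul_sub, Matrix.mul_smul, Matrix.mul_smul, Matrix.mul_one,
      ← Matrix.mul_assoc, Matrix.mul_nonsing_inv _ hMdet, Matrix.one_mul]
  -- units
  have hAtα : IsUnit (At + (α : ℂ) • (1 : Matrix (Fin m) (Fin m) ℂ)) := by
    have := (Matrix.isUnit_iff_isUnit_det _).1 hAB
    rw [hfac1, Matrix.det_mul] at this
    exact (Matrix.isUnit_iff_isUnit_det _).2 (isUnit_of_mul_isUnit_right this)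
  have hKtβ : IsUnit (Kt + (β : ℂ) • (1 : Matrix (Fin n) (Fin n) ℂ)) := by
    have := (Matrix.isUnit_iff_isUnit_det _).1 hKM
    rw [hfac2, Matrix.det_mul] at this
    exact (Matrix.isUnit_iff_isUnit_det _).2 (isUnit_of_mul_isUnit_right this)
  set P : Matrix (Fin m × Fin n) (Fin m × Fin n) ℂ :=
    (At + (α : ℂ) • 1) ⊗ₖ (Kt + (β : ℂ) • 1) with hPdef
  set Q : Matrix (Fin m × Fin n) (Fin m × Fin n) ℂ :=
    (At - (β : ℂ) • 1) ⊗ₖ (Kt - (α : ℂ) • 1)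
      + c • ((At + (α : ℂ) • 1) ⊗ₖ (1 : Matrix (Fin n) (Fin n) ℂ))
      + c • ((1 : Matrix (Fin m) (Fin m) ℂ) ⊗ₖ (Kt - (α : ℂ) • 1)) with hQdef
  have hPdet : IsUnit P.det := by
    rw [hPdef, Matrix.det_kronecker]
    exact (((Matrix.isUnit_iff_isUnit_det _).1 hAtα).pow _).mul
      (((Matrix.isUnit_iff_isUnit_det _).1 hKtβ).pow _)
  have hBMdet : IsUnit ((B ⊗ₖ M).det) := by
    rw [Matrix.det_kronecker]
    exact (hBdet.pow _).mul (hMdet.pow _)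
  -- rewrite T
  have e1 : (A + (α : ℂ) • B) ⊗ₖ ((τ : ℂ) • K + (β : ℂ) • M) = (B ⊗ₖ M) * P := by
    rw [hfac1, hfac2, Matrix.mul_kronecker_mul]
  have e2 : (A - (β : ℂ) • B) ⊗ₖ ((τ : ℂ) • K - (α : ℂ) • M)
      = (B ⊗ₖ M) * ((At - (β : ℂ) • 1) ⊗ₖ (Kt - (α : ℂ) • 1)) := by
    rw [hfac3, hfac4, Matrix.mul_kronecker_mul]
  have e3 : (A + (α : ℂ) • B) ⊗ₖ M
      = (B ⊗ₖ M) * ((At + (α : ℂ) • 1) ⊗ₖ (1 : Matrix (Fin n) (Fin n) ℂ)) := by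
    conv_lhs => rw [hfac1, ← Matrix.mul_one M]
    rw [Matrix.mul_kronecker_mul]
  have e4 : B ⊗ₖ ((τ : ℂ) • K - (α : ℂ) • M)
      = (B ⊗ₖ M) * ((1 : Matrix (Fin m) (Fin m) ℂ) ⊗ₖ (Kt - (α : ℂ) • 1)) := by
    conv_lhs => rw [hfac4, ← Matrix.mul_one B]
    rw [Matrix.mul_kronecker_mul]
  have hT : mskpT A B M K τ α β ω = P⁻¹ * Q := by
    rw [mskpT]
    rw [e1, e2, e3, e4, ← Matrix.mul_smul, ← Matrix.mul_smul, ← Matrix.mul_add,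
      ← Matrix.mul_add, ← hQdef, Matrix.mul_inv_rev, Matrix.mul_assoc,
      ← Matrix.mul_assoc (B ⊗ₖ M)⁻¹, Matrix.nonsing_inv_mul _ hBMdet, Matrix.one_mul]
  -- p eigenvalue gives singular pencil
  rw [spectrum.mem_iff] at hp
  have hSdet : (p • P - Q).det = 0 := by
    by_contra h
    apply hp
    have hPinv : IsUnit P⁻¹ := Matrix.isUnit_nonsing_inv_iff.2
      ((Matrix.isUnit_iff_isUnit_det _).2 hPdet)
    have heq : algebraMap ℂ _ p - mskpT A B M K τ α β ω = P⁻¹ * (p • P - Q) := by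
      rw [Algebra.algebraMap_eq_smul_one, hT, Matrix.mul_sub, Matrix.mul_smul,
        Matrix.nonsing_inv_mul _ hPdet]
    rw [heq]
    exact hPinv.mul ((Matrix.isUnit_iff_isUnit_det _).2 (isUnit_iff_ne_zero.2 h))
  -- express the pencil in terms of commuting X, Y
  set X : Matrix (Fin m × Fin n) (Fin m × Fin n) ℂ :=
    At ⊗ₖ (1 : Matrix (Fin n) (Fin n) ℂ) with hXdef
  set Y : Matrix (Fin m × Fin n) (Fin m × Fin n) ℂ :=
    (1 : Matrix (Fin m) (Fin m) ℂ) ⊗ₖ Kt with hYdef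
  have hXYk : X * Y = At ⊗ₖ Kt := by
    rw [hXdef, hYdef, ← Matrix.mul_kronecker_mul, Matrix.mul_one, Matrix.one_mul]
  have hYXk : Y * X = At ⊗ₖ Kt := by
    rw [hXdef, hYdef, ← Matrix.mul_kronecker_mul, Matrix.mul_one, Matrix.one_mul]
  have hXY : X * Y = Y * X := by rw [hXYk, hYXk]
  have hS : p • P - Q = (p - 1) • (X * Y) + (p * (β : ℂ) + (α : ℂ) - c) • X
      + (p * (α : ℂ) + (β : ℂ) - c) • Y
      + ((p - 1) * (α : ℂ) * (β : ℂ)) • (1 : Matrix (Fin m × Fin n) (Fin m × Fin n) ℂ) := by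
    rw [hXYk, hPdef, hQdef, hXdef, hYdef, ← Matrix.one_kronecker_one (α := ℂ) (m := Fin m) (n := Fin n)]
    simp only [my_sub_kronecker, my_kronecker_sub, Matrix.add_kronecker, Matrix.kronecker_add,
      Matrix.smul_kronecker, Matrix.kronecker_smul]
    module
  have hSX : (p • P - Q) * X = X * (p • P - Q) := by
    rw [hS]
    exact comm_aux _ _ _ _ X Y hXY
  have hSY : (p • P - Q) * Y = Y * (p • P - Q) := by
    rw [hS, hXY]
    have hre : (p - 1) • (Y * X) + (p * (β : ℂ) + (α : ℂ) - c) • X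
        + (p * (α : ℂ) + (β : ℂ) - c) • Y + ((p - 1) * (α : ℂ) * (β : ℂ)) • 1
        = (p - 1) • (Y * X) + (p * (α : ℂ) + (β : ℂ) - c) • Y
        + (p * (β : ℂ) + (α : ℂ) - c) • X + ((p - 1) * (α : ℂ) * (β : ℂ))
          • (1 : Matrix (Fin m × Fin n) (Fin m × Fin n) ℂ) := by
      module
    rw [hre]
    exact comm_aux _ _ _ _ Y X hXY.symm
  obtain ⟨v, hv, lt, mt, hSv, hXv, hYv⟩ :=
    common_eigenvector_ker (p • P - Q) X Y hSdet hSX hSY hXY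
  have hltspec : lt ∈ spectrum ℂ At := kron_left_eigvec At lt v hv (by rw [← hXdef]; exact hXv)
  have hmtspec : mt ∈ spectrum ℂ Kt := kron_right_eigvec Kt mt v hv (by rw [← hYdef]; exact hYv)
  -- scalar equation
  have h7 : (p • P - Q).mulVec v = ((p - 1) * mt * lt + (p * (β : ℂ) + (α : ℂ) - c) * lt
      + (p * (α : ℂ) + (β : ℂ) - c) * mt + (p - 1) * (α : ℂ) * (β : ℂ)) • v := by
    have hXYv : (X * Y) *ᵥ v = (lt * mt) • v := by
      rw [← Matrix.mulVec_mulVec, hYv, Matrix.mulVec_smul, hXv, smul_smul, mul_comm]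
    rw [hS]
    simp only [Matrix.add_mulVec, Matrix.smul_mulVec, hXYv, hXv, hYv,
      Matrix.one_mulVec, smul_smul]
    module
  rw [hSv] at h7
  have hq : (p - 1) * mt * lt + (p * (β : ℂ) + (α : ℂ) - c) * lt
      + (p * (α : ℂ) + (β : ℂ) - c) * mt + (p - 1) * (α : ℂ) * (β : ℂ) = 0 :=
    (smul_eq_zero.1 h7.symm).resolve_right hv
  have hlta : lt + (α : ℂ) ≠ 0 := spectrum_add_ne At (α : ℂ) lt hAtα hltspec
  have hmtb : mt + (β : ℂ) ≠ 0 := spectrum_add_ne Kt (β : ℂ) mt hKtβ hmtspec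
  refine ⟨lt, hltspec, mt, hmtspec, ?_⟩
  rw [eq_div_iff (mul_ne_zero hlta hmtb)]
  linear_combination hq
end

section
/- Let A, B be m×m complex matrices, M, K be n×n complex matrices, τ a real number, and α, β, ω real numbers with α + β ≠ 0, ω ≠ 2, and (A+αB)⊗(τK+βM) invertible. Then T(α,β,ω) = I − P(α,β,ω)⁻¹·Q, where Q = A⊗M + τ·B⊗K. -/
open Matrix Kronecker

/-- The MSKP preconditioner `P(α,β,ω)`. -/
noncomputable def mskpP {m n : ℕ} (A B : Matrix (Fin m) (Fin m) ℂ)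
    (M K : Matrix (Fin n) (Fin n) ℂ) (τ α β ω : ℝ) :
    Matrix (Fin m × Fin n) (Fin m × Fin n) ℂ :=
  ((2 / ((α + β) * (2 - ω)) : ℝ) : ℂ) •
    ((A + (α : ℂ) • B) ⊗ₖ ((τ : ℂ) • K + (β : ℂ) • M))

/-- The MSKP iteration matrix is `T(α,β,ω) = I − P(α,β,ω)⁻¹·Q`
where `Q = A⊗M + τ·B⊗K`. -/
theorem mskp_T_eq_one_sub_Pinv_Q {m n : ℕ} (A B : Matrix (Fin m) (Fin m) ℂ)
    (M K : Matrix (Fin n) (Fin n) ℂ) (τ α β ω : ℝ)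
    (hαβ : α + β ≠ 0) (hω : ω ≠ 2)
    (hinv : IsUnit ((A + (α : ℂ) • B) ⊗ₖ ((τ : ℂ) • K + (β : ℂ) • M))) :
    mskpT A B M K τ α β ω
      = 1 - (mskpP A B M K τ α β ω)⁻¹ * (A ⊗ₖ M + (τ : ℂ) • (B ⊗ₖ K)) := by

  set c : ℂ := ((2 / ((α + β) * (2 - ω)) : ℝ) : ℂ) with hc
  have hc0 : c ≠ 0 := by
    simp only [hc, Ne, Complex.ofReal_eq_zero, div_eq_zero_iff, mul_eq_zero, sub_eq_zero]
    push_neg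
    exact ⟨two_ne_zero, hαβ, fun h => hω h.symm⟩
  set S := ((A + (α : ℂ) • B) ⊗ₖ ((τ : ℂ) • K + (β : ℂ) • M)) with hS
  have hdet : IsUnit S.det := (Matrix.isUnit_iff_isUnit_det S).mp hinv
  have hPinv : (mskpP A B M K τ α β ω)⁻¹ = c⁻¹ • S⁻¹ := by
    rw [mskpP, ← hc, ← hS]
    have : Invertible c := invertibleOfNonzero hc0
    rw [Matrix.inv_smul (A := S) c hdet, invOf_eq_inv c]
  rw [hPinv, Matrix.smul_mul, ← Matrix.mul_smul, ← Matrix.nonsing_inv_mul S hdet,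
    ← Matrix.mul_sub, mskpT, ← hS]
  congr 1
  ext ⟨i, k⟩ ⟨j, l⟩
  simp only [hS, Matrix.add_apply, Matrix.sub_apply, Matrix.smul_apply,
    Matrix.kroneckerMap_apply, smul_eq_mul, hc]
  have h2 : (2 - (ω : ℂ)) ≠ 0 := by
    intro h
    exact hω (by exact_mod_cast (sub_eq_zero.mp h).symm)
  have hab : ((α : ℂ) + β) ≠ 0 := by exact_mod_cast hαβ
  push_cast
  field_simp
  ring
end

section
/- Let A, B be m×m complex matrices with B and A+αB invertible, let M, K be n×n complex matrices with M and τK+βM invertible, let τ be real and α, β > 0, 0 ≤ ω < 2. Suppose vectors u, v, w in ℂ^{mn} satisfy the two MSKP half-steps ((A+αB)⊗M)·v = b − (B⊗(τK−αM))·u and (B⊗(τK+βM))·w = (B⊗(τK + ((α+β)ω/2 − α)·M))·u + ((α+β)(2−ω)/2)·(B⊗M)·v. Then w = T(α,β,ω)·u + P(α,β,ω)⁻¹·b. -/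
open Matrix Kronecker

/-- Eliminating the intermediate vector from the two-step MSKP scheme yields
its one-step fixed-point form `w = T(α,β,ω)·u + P(α,β,ω)⁻¹·b`. -/
theorem mskp_two_step_eq_one_step {m n : ℕ}
    (A B : Matrix (Fin m) (Fin m) ℂ) (M K : Matrix (Fin n) (Fin n) ℂ)
    (τ α β ω : ℝ)
    (hB : IsUnit B) (hAB : IsUnit (A + (α : ℂ) • B))
    (hM : IsUnit M) (hKM : IsUnit ((τ : ℂ) • K + (β : ℂ) • M))
    (hα : 0 < α) (hβ : 0 < β) (hω0 : 0 ≤ ω) (hω2 : ω < 2)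
    (b u v w : Fin m × Fin n → ℂ)
    (hstep1 : ((A + (α : ℂ) • B) ⊗ₖ M).mulVec v
        = b - (B ⊗ₖ ((τ : ℂ) • K - (α : ℂ) • M)).mulVec u)
    (hstep2 : (B ⊗ₖ ((τ : ℂ) • K + (β : ℂ) • M)).mulVec w
        = (B ⊗ₖ ((τ : ℂ) • K + (((α + β) * ω / 2 - α : ℝ) : ℂ) • M)).mulVec u
          + (((α + β) * (2 - ω) / 2 : ℝ) : ℂ) • (B ⊗ₖ M).mulVec v) :
    w = (mskpT A B M K τ α β ω).mulVec u
        + (mskpP A B M K τ α β ω)⁻¹.mulVec b := by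
  set A' : Matrix (Fin m) (Fin m) ℂ := A + (α : ℂ) • B with hA'
  set N' : Matrix (Fin n) (Fin n) ℂ := (τ : ℂ) • K + (β : ℂ) • M with hN'
  set Q : Matrix (Fin m × Fin n) (Fin m × Fin n) ℂ := A' ⊗ₖ N' with hQ
  set c : ℂ := (((α + β) * (2 - ω) / 2 : ℝ) : ℂ) with hc
  have h2ω : (0:ℝ) < 2 - ω := by linarith
  have hcpos : (0:ℝ) < (α + β) * (2 - ω) / 2 := by positivity
  have hcne : c ≠ 0 := by
    simp only [hc, ne_eq, Complex.ofReal_eq_zero]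
    exact ne_of_gt hcpos
  have hBd : IsUnit B.det := (Matrix.isUnit_iff_isUnit_det B).mp hB
  have hA'd : IsUnit A'.det := (Matrix.isUnit_iff_isUnit_det A').mp hAB
  have hN'd : IsUnit N'.det := (Matrix.isUnit_iff_isUnit_det N').mp hKM
  have hQd : IsUnit Q.det := by
    rw [hQ, Matrix.det_kronecker]
    exact (hA'd.pow _).mul (hN'd.pow _)
  -- multiply step 2 on the left by ((A+αB) * B⁻¹) ⊗ₖ 1
  have key : Q.mulVec w
      = (A' ⊗ₖ ((τ : ℂ) • K + (((α + β) * ω / 2 - α : ℝ) : ℂ) • M)).mulVec u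
        + c • (A' ⊗ₖ M).mulVec v := by
    have h := congrArg (fun x => ((A' * B⁻¹) ⊗ₖ (1 : Matrix (Fin n) (Fin n) ℂ)).mulVec x) hstep2
    simp only [Matrix.mulVec_add, Matrix.mulVec_smul, Matrix.mulVec_mulVec,
      ← Matrix.mul_kronecker_mul, Matrix.one_mul, Matrix.mul_assoc,
      Matrix.nonsing_inv_mul B hBd, Matrix.mul_one] at h
    exact h
  rw [hstep1] at key
  -- so Q * w = S * u + c • b where S is the bracket of T
  have keyS : Q.mulVec w
      = ((A - (β : ℂ) • B) ⊗ₖ ((τ : ℂ) • K - (α : ℂ) • M)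
          + (((α + β) * ω / 2 : ℝ) : ℂ) • (A' ⊗ₖ M)
          + (((α + β) * ω / 2 : ℝ) : ℂ) • (B ⊗ₖ ((τ : ℂ) • K - (α : ℂ) • M))).mulVec u
        + c • b := by
    rw [key]
    have hmat : (A - (β : ℂ) • B) ⊗ₖ ((τ : ℂ) • K - (α : ℂ) • M)
          + (((α + β) * ω / 2 : ℝ) : ℂ) • (A' ⊗ₖ M)
          + (((α + β) * ω / 2 : ℝ) : ℂ) • (B ⊗ₖ ((τ : ℂ) • K - (α : ℂ) • M))
        = A' ⊗ₖ ((τ : ℂ) • K + (((α + β) * ω / 2 - α : ℝ) : ℂ) • M)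
          - c • (B ⊗ₖ ((τ : ℂ) • K - (α : ℂ) • M)) := by
      ext ⟨i, k⟩ ⟨j, l⟩
      simp only [Matrix.add_apply, Matrix.sub_apply, Matrix.smul_apply,
        Matrix.kronecker_apply, smul_eq_mul, hA', hc]
      push_cast
      ring
    rw [hmat, Matrix.sub_mulVec, smul_sub, Matrix.smul_mulVec]
    abel
  -- invert Q
  have hw : w = Q⁻¹.mulVec (Q.mulVec w) := by
    rw [Matrix.mulVec_mulVec, Matrix.nonsing_inv_mul Q hQd, Matrix.one_mulVec]
  -- the inverse of the preconditioner
  have hPinv : (mskpP A B M K τ α β ω)⁻¹ = c • Q⁻¹ := by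
    apply Matrix.inv_eq_right_inv
    rw [mskpP, Matrix.smul_mul, Matrix.mul_smul, smul_smul,
      Matrix.mul_nonsing_inv Q hQd]
    have : ((2 / ((α + β) * (2 - ω)) : ℝ) : ℂ) * c = 1 := by
      rw [hc, ← Complex.ofReal_mul, div_mul_div_comm]
      norm_cast
      rw [div_eq_one_iff_eq]
      · ring
      · positivity
    rw [this, one_smul]
  rw [hPinv, mskpT, hw, keyS]
  simp only [← hA', ← hN', ← hQ, Matrix.mulVec_add, Matrix.mulVec_mulVec,
    Matrix.smul_mulVec, Matrix.mulVec_smul]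
end
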